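/- Let n ≥ 1 and let Λ, K_d be constant symmetric n×n real matrices with Λ positive definite. Let M : ℝ → ℝ^{n×n} be continuously differentiable with M(t) symmetric for every t and m₁·I ⪯ M(t) ⪯ m₂·I for constants 0 < m₁ ≤ m₂ (Loewner order). Let S, D : ℝ → ℝ^{n×n} be such that S(t) is skew-symmetric and D(t) is symmetric for every t, and suppose there exists ε > 0 such that D(t) + K_d + (1/2)·I − (1/4)·(M(t)⁻¹ + M(t)) ⪰ ε·I for all t. Then there exist constants C ≥ 1 and β > 0 such that every differentiable curve (q̃, σ) : ℝ → ℝⁿ × ℝⁿ satisfying the closed-loop error dynamics q̃'(t) = M(t)⁻¹(σ(t) − Λ q̃(t)) and σ'(t) = −M(t)⁻¹ Λ q̃(t) − (S(t) + D(t) − (1/2)·M'(t) + K_d) M(t)⁻¹ σ(t) obeys ‖(q̃(t), σ(t))‖ ≤ C · e^{−β(t−t₀)} · ‖(q̃(t₀), σ(t₀))‖ for all t ≥ t₀; in particular the origin of the closed-loop error system is (uniformly) exponentially stable. -/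

import Mathlib

/-!
`V(q̃, σ) = q̃ᵀΛq̃ + σᵀM⁻¹σ` is a strict Lyapunov function for the closed loop. Writing
`y = M⁻¹σ`, the skew-symmetric `S` drops out of `V̇`, the `Ṁ` terms cancel, and completing a square
gives
  `V̇ = -2 ‖Λq̃ - ½(σ - y)‖²_{M⁻¹} - 2 yᵀ(D + K_d + ½I - ¼(M⁻¹ + M)) y`,
so the gain condition bounds `-V̇` below by twice that square plus `2ε|y|²`. The bounds
`m₁I ⪯ M ⪯ m₂I` and the positivity of `Λ` show that this dominates a fixed multiple of `V`,
whence `V` decays exponentially by Grönwall; since `V` is equivalent to `|q̃|² + |σ|²`, so does the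
error.
-/

open Matrix

section QuadraticForm

variable {ι : Type*} [Fintype ι]

theorem dotProduct_self_nonneg (x : ι → ℝ) : 0 ≤ x ⬝ᵥ x :=
  Finset.sum_nonneg fun i _ => mul_self_nonneg (x i)

theorem Matrix.IsSymm.dotProduct_mulVec_comm {A : Matrix ι ι ℝ} (hA : A.IsSymm) (x y : ι → ℝ) :
    x ⬝ᵥ A *ᵥ y = y ⬝ᵥ A *ᵥ x := by
  rw [dotProduct_mulVec, ← mulVec_transpose, hA.eq, dotProduct_comm]

theorem dotProduct_mulVec_self_eq_zero_of_transpose_eq_neg {S : Matrix ι ι ℝ} (hS : Sᵀ = -S)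
    (x : ι → ℝ) : x ⬝ᵥ S *ᵥ x = 0 := by
  have h := dotProduct_mulVec x S x
  rw [← mulVec_transpose, hS, neg_mulVec, neg_dotProduct, dotProduct_comm (S *ᵥ x)] at h
  linarith

theorem mul_dotProduct_self_le_of_posSemidef [DecidableEq ι] {A : Matrix ι ι ℝ} {c : ℝ}
    (h : (A - c • (1 : Matrix ι ι ℝ)).PosSemidef) (x : ι → ℝ) : c * (x ⬝ᵥ x) ≤ x ⬝ᵥ A *ᵥ x := by
  have := h.dotProduct_mulVec_nonneg x
  simp only [star_trivial, sub_mulVec, smul_mulVec, one_mulVec, dotProduct_sub, dotProduct_smul,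
    smul_eq_mul] at this
  linarith

theorem dotProduct_mulVec_le_of_posSemidef [DecidableEq ι] {A : Matrix ι ι ℝ} {c : ℝ}
    (h : (c • (1 : Matrix ι ι ℝ) - A).PosSemidef) (x : ι → ℝ) : x ⬝ᵥ A *ᵥ x ≤ c * (x ⬝ᵥ x) := by
  have := h.dotProduct_mulVec_nonneg x
  simp only [star_trivial, sub_mulVec, smul_mulVec, one_mulVec, dotProduct_sub, dotProduct_smul,
    smul_eq_mul] at this
  linarith

theorem exists_dotProduct_mulVec_le (A : Matrix ι ι ℝ) :
    ∃ C, ∀ x : ι → ℝ, x ⬝ᵥ A *ᵥ x ≤ C * (x ⬝ᵥ x) := by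
  refine ⟨∑ i, ∑ j, |A i j|, fun x => ?_⟩
  have hcoord : ∀ i, x i * x i ≤ x ⬝ᵥ x := fun i =>
    Finset.single_le_sum (f := fun j => x j * x j) (fun j _ => mul_self_nonneg (x j))
      (Finset.mem_univ i)
  have hexpand : x ⬝ᵥ A *ᵥ x = ∑ i, ∑ j, x i * (A i j * x j) := by
    simp only [dotProduct, mulVec, Finset.mul_sum]
  rw [hexpand, Finset.sum_mul]
  refine Finset.sum_le_sum fun i _ => ?_
  rw [Finset.sum_mul]
  refine Finset.sum_le_sum fun j _ => ?_
  calc x i * (A i j * x j) ≤ |A i j| * |x i * x j| := by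
        rw [← abs_mul, mul_left_comm]; exact le_abs_self _
    _ ≤ |A i j| * (x ⬝ᵥ x) := by
        gcongr
        rw [abs_mul]
        nlinarith [hcoord i, hcoord j, abs_mul_abs_self (x i), abs_mul_abs_self (x j),
          sq_nonneg (|x i| - |x j|)]

theorem dotProduct_mulVec_add_le {A : Matrix ι ι ℝ} (hA : ∀ x, 0 ≤ x ⬝ᵥ A *ᵥ x) (x y : ι → ℝ) :
    (x + y) ⬝ᵥ A *ᵥ (x + y) ≤ 2 * (x ⬝ᵥ A *ᵥ x) + 2 * (y ⬝ᵥ A *ᵥ y) := by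
  have := hA (x - y)
  simp only [mulVec_add, mulVec_sub, add_dotProduct, sub_dotProduct, dotProduct_add,
    dotProduct_sub] at this ⊢
  linarith

theorem mul_dotProduct_mulVec_le {A : Matrix ι ι ℝ} {m : ℝ} (hm : 0 ≤ m) {x : ι → ℝ}
    (h : m * (x ⬝ᵥ x) ≤ x ⬝ᵥ A *ᵥ x) : m * (x ⬝ᵥ A *ᵥ x) ≤ A *ᵥ x ⬝ᵥ A *ᵥ x := by
  have hsq := dotProduct_self_nonneg (A *ᵥ x - m • x)
  simp only [sub_dotProduct, dotProduct_sub, smul_dotProduct, dotProduct_smul, smul_eq_mul,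
    dotProduct_comm (A *ᵥ x) x] at hsq
  nlinarith [mul_le_mul_of_nonneg_left h hm]

theorem mulVec_dotProduct_mulVec_le {A : Matrix ι ι ℝ} {m : ℝ} (hm : 0 < m) (hA : A.IsSymm)
    (hpos : ∀ x, 0 ≤ x ⬝ᵥ A *ᵥ x) (hle : ∀ x, x ⬝ᵥ A *ᵥ x ≤ m * (x ⬝ᵥ x)) (x : ι → ℝ) :
    A *ᵥ x ⬝ᵥ A *ᵥ x ≤ m * (x ⬝ᵥ A *ᵥ x) := by
  have h₁ := hpos (m • x - A *ᵥ x)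
  have h₂ := hle (A *ᵥ x)
  simp only [mulVec_sub, mulVec_smul, sub_dotProduct, dotProduct_sub, smul_dotProduct,
    dotProduct_smul, smul_eq_mul, hA.dotProduct_mulVec_comm x (A *ᵥ x)] at h₁
  have : m * (A *ᵥ x ⬝ᵥ A *ᵥ x) ≤ m * (m * (x ⬝ᵥ A *ᵥ x)) := by nlinarith
  exact le_of_mul_le_mul_left this hm

end QuadraticForm

section Inverse

variable {ι : Type*} [Fintype ι] [DecidableEq ι] {A : Matrix ι ι ℝ} {m : ℝ}

theorem mulVec_inv_mulVec (hA : IsUnit A) (x : ι → ℝ) : A *ᵥ A⁻¹ *ᵥ x = x := by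
  rw [mulVec_mulVec, mul_nonsing_inv _ ((isUnit_iff_isUnit_det A).1 hA), one_mulVec]

theorem inv_mulVec_mulVec (hA : IsUnit A) (x : ι → ℝ) : A⁻¹ *ᵥ A *ᵥ x = x := by
  rw [mulVec_mulVec, nonsing_inv_mul _ ((isUnit_iff_isUnit_det A).1 hA), one_mulVec]

theorem isUnit_of_forall_mul_dotProduct_self_le (hm : 0 < m)
    (h : ∀ x, m * (x ⬝ᵥ x) ≤ x ⬝ᵥ A *ᵥ x) : IsUnit A := by
  rw [isUnit_iff_isUnit_det, isUnit_iff_ne_zero, ne_eq, ← exists_mulVec_eq_zero_iff]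
  rintro ⟨v, hv, hAv⟩
  have hv' := h v
  rw [hAv, dotProduct_zero] at hv'
  exact hv (dotProduct_self_eq_zero.1
    (le_antisymm (nonpos_of_mul_nonpos_right hv' hm) (dotProduct_self_nonneg v)))

theorem dotProduct_inv_mulVec_eq (hA : IsUnit A) (x : ι → ℝ) :
    x ⬝ᵥ A⁻¹ *ᵥ x = A⁻¹ *ᵥ x ⬝ᵥ A *ᵥ A⁻¹ *ᵥ x := by
  rw [mulVec_inv_mulVec hA, dotProduct_comm]

theorem dotProduct_inv_mulVec_nonneg (hm : 0 < m) (h : ∀ x, m * (x ⬝ᵥ x) ≤ x ⬝ᵥ A *ᵥ x)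
    (x : ι → ℝ) : 0 ≤ x ⬝ᵥ A⁻¹ *ᵥ x := by
  rw [dotProduct_inv_mulVec_eq (isUnit_of_forall_mul_dotProduct_self_le hm h)]
  exact (mul_nonneg hm.le (dotProduct_self_nonneg _)).trans (h _)

theorem mul_dotProduct_inv_mulVec_le (hm : 0 < m) (h : ∀ x, m * (x ⬝ᵥ x) ≤ x ⬝ᵥ A *ᵥ x)
    (x : ι → ℝ) : m * (x ⬝ᵥ A⁻¹ *ᵥ x) ≤ x ⬝ᵥ x := by
  simpa [mulVec_inv_mulVec (isUnit_of_forall_mul_dotProduct_self_le hm h), dotProduct_comm]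
    using mul_dotProduct_mulVec_le hm.le (h (A⁻¹ *ᵥ x))

theorem dotProduct_self_le_mul_dotProduct_inv_mulVec {m₁ m₂ : ℝ} (hA : A.IsSymm) (hm₁ : 0 < m₁)
    (hlo : ∀ x, m₁ * (x ⬝ᵥ x) ≤ x ⬝ᵥ A *ᵥ x) (hm₂ : 0 < m₂)
    (hhi : ∀ x, x ⬝ᵥ A *ᵥ x ≤ m₂ * (x ⬝ᵥ x)) (x : ι → ℝ) : x ⬝ᵥ x ≤ m₂ * (x ⬝ᵥ A⁻¹ *ᵥ x) := by
  have hpos : ∀ x, 0 ≤ x ⬝ᵥ A *ᵥ x := fun x =>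
    (mul_nonneg hm₁.le (dotProduct_self_nonneg x)).trans (hlo x)
  simpa [mulVec_inv_mulVec (isUnit_of_forall_mul_dotProduct_self_le hm₁ hlo), dotProduct_comm]
    using mulVec_dotProduct_mulVec_le hm₂ hA hpos hhi (A⁻¹ *ᵥ x)

theorem Matrix.PosDef.exists_pos_mul_dotProduct_self_le (hA : A.PosDef) :
    ∃ c > 0, ∀ x, c * (x ⬝ᵥ x) ≤ x ⬝ᵥ A *ᵥ x := by
  obtain ⟨C, hC⟩ := exists_dotProduct_mulVec_le A⁻¹
  have hC' : ∀ x, x ⬝ᵥ A⁻¹ *ᵥ x ≤ max C 1 * (x ⬝ᵥ x) := fun x =>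
    (hC x).trans (mul_le_mul_of_nonneg_right (le_max_left _ _) (dotProduct_self_nonneg x))
  have hinv := hA.inv
  have hsymm : A⁻¹.IsSymm := isHermitian_iff_isSymm.1 hinv.isHermitian
  have hpos : ∀ x, 0 ≤ x ⬝ᵥ A⁻¹ *ᵥ x := fun x => by
    simpa using hinv.posSemidef.dotProduct_mulVec_nonneg x
  have hmax : 0 < max C 1 := lt_max_of_lt_right one_pos
  refine ⟨(max C 1)⁻¹, inv_pos.2 hmax, fun x => ?_⟩
  have := mulVec_dotProduct_mulVec_le hmax hsymm hpos hC' (A *ᵥ x)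
  rw [inv_mulVec_mulVec hA.isUnit, dotProduct_comm (A *ᵥ x)] at this
  rwa [inv_mul_le_iff₀ hmax]

end Inverse

section Derivative

theorem HasDerivAt.dotProduct_mulVec {m n : Type*} [Fintype m] [Fintype n]
    {f : ℝ → m → ℝ} {g : ℝ → n → ℝ} {A : ℝ → Matrix m n ℝ} {f' : m → ℝ} {g' : n → ℝ}
    {A' : Matrix m n ℝ} {t : ℝ} (hf : HasDerivAt f f' t) (hg : HasDerivAt g g' t)
    (hA : ∀ i j, HasDerivAt (fun s => A s i j) (A' i j) t) :
    HasDerivAt (fun s => f s ⬝ᵥ A s *ᵥ g s)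
      (f' ⬝ᵥ A t *ᵥ g t + f t ⬝ᵥ A' *ᵥ g t + f t ⬝ᵥ A t *ᵥ g') t := by
  have hderiv := HasDerivAt.fun_sum fun i (_ : i ∈ Finset.univ) => (hasDerivAt_pi.1 hf i).fun_mul
    (HasDerivAt.fun_sum fun j (_ : j ∈ Finset.univ) => (hA i j).fun_mul (hasDerivAt_pi.1 hg j))
  refine hderiv.congr_deriv ?_
  simp only [dotProduct, mulVec, ← Finset.sum_add_distrib, mul_add, Finset.mul_sum]
  exact Finset.sum_congr rfl fun i _ => Finset.sum_congr rfl fun j _ => by ring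

variable {ι : Type*} [Fintype ι] [DecidableEq ι]

-- Any norm would do; this one makes matrices a complete normed algebra, as `Ring.inverse` needs.
attribute [local instance] Matrix.linftyOpNormedAddCommGroup Matrix.linftyOpNormedSpace
  Matrix.linftyOpNormedRing Matrix.linftyOpNormedAlgebra

theorem hasDerivAt_matrix_of_apply {A : ℝ → Matrix ι ι ℝ} {A' : Matrix ι ι ℝ} {t : ℝ}
    (h : ∀ i j, HasDerivAt (fun s => A s i j) (A' i j) t) : HasDerivAt A A' t := by
  have hsingle (B : Matrix ι ι ℝ) : B = ∑ i, ∑ j, B i j • single i j (1 : ℝ) := by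
    simpa [smul_single] using matrix_eq_sum_single B
  rw [funext fun s => hsingle (A s), hsingle A']
  exact HasDerivAt.fun_sum fun i _ => HasDerivAt.fun_sum fun j _ => (h i j).smul_const _

omit [DecidableEq ι] in
theorem HasDerivAt.matrix_apply {A : ℝ → Matrix ι ι ℝ} {A' : Matrix ι ι ℝ} {t : ℝ}
    (h : HasDerivAt A A' t) (i j : ι) : HasDerivAt (fun s => A s i j) (A' i j) t :=
  (LinearMap.toContinuousLinearMap (entryLinearMap ℝ ℝ i j)).hasFDerivAt.comp_hasDerivAt t h

theorem HasDerivAt.matrix_inv {A : ℝ → Matrix ι ι ℝ} {A' : Matrix ι ι ℝ} {t : ℝ}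
    (h : HasDerivAt A A' t) (ht : IsUnit (A t)) :
    HasDerivAt (fun s => (A s)⁻¹) (-((A t)⁻¹ * A' * (A t)⁻¹)) t := by
  have : CompleteSpace (Matrix ι ι ℝ) := FiniteDimensional.complete ℝ _
  obtain ⟨u, hu⟩ := ht
  have hinv := hasFDerivAt_ringInverse (𝕜 := ℝ) u
  rw [hu] at hinv
  rw [show (fun s => (A s)⁻¹) = Ring.inverse ∘ A from funext fun s => nonsing_inv_eq_ringInverse _,
    nonsing_inv_eq_ringInverse, ← hu]
  exact (hinv.comp_hasDerivAt t h).congr_deriv (by simp [mul_assoc])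

theorem hasDerivAt_matrix_inv_apply {A : ℝ → Matrix ι ι ℝ} {A' : Matrix ι ι ℝ} {t : ℝ}
    (h : ∀ i j, HasDerivAt (fun s => A s i j) (A' i j) t) (ht : IsUnit (A t)) (i j : ι) :
    HasDerivAt (fun s => (A s)⁻¹ i j) ((-((A t)⁻¹ * A' * (A t)⁻¹)) i j) t :=
  ((hasDerivAt_matrix_of_apply h).matrix_inv ht).matrix_apply i j

end Derivative

theorem le_mul_exp_of_hasDerivAt_le {V V' : ℝ → ℝ} {b t₀ t : ℝ}
    (hV : ∀ s, HasDerivAt V (V' s) s) (hle : ∀ s, V' s ≤ -b * V s) (ht : t₀ ≤ t) :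
    V t ≤ V t₀ * Real.exp (-b * (t - t₀)) := by
  have := le_gronwallBound_of_liminf_deriv_right_le (f := V) (f' := V') (K := -b) (ε := 0)
    (fun s _ => (hV s).continuousAt.continuousWithinAt)
    (fun s _ r hr => (hV s).hasDerivWithinAt.liminf_right_slope_le hr) le_rfl
    (fun s _ => by simpa using hle s) t ⟨ht, le_rfl⟩
  rwa [gronwallBound_ε0] at this

theorem sqrt_le_of_le_mul_exp {c C V₀ V₁ Z₀ Z₁ b d : ℝ} (hc : 0 < c) (hZ₀ : 0 ≤ Z₀)
    (hlo : c * Z₁ ≤ V₁) (hhi : V₀ ≤ C * Z₀) (hV : V₁ ≤ V₀ * Real.exp (-b * d)) :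
    √Z₁ ≤ max 1 √(C / c) * Real.exp (-(b / 2) * d) * √Z₀ := by
  have hexp : Real.exp (-b * d) = Real.exp (-(b / 2) * d) ^ 2 := by
    rw [← Real.exp_nat_mul]; ring_nf
  have hZ : Z₁ ≤ C / c * (Real.exp (-(b / 2) * d) ^ 2 * Z₀) := by
    rw [div_mul_eq_mul_div, le_div_iff₀ hc, ← hexp]
    nlinarith [mul_le_mul_of_nonneg_right hhi (Real.exp_pos (-b * d)).le]
  calc √Z₁ ≤ √(C / c) * (Real.exp (-(b / 2) * d) * √Z₀) := by
        rw [← Real.sqrt_sq (Real.exp_pos _).le, ← Real.sqrt_mul (sq_nonneg _),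
          ← Real.sqrt_mul' _ (by positivity)]
        exact Real.sqrt_le_sqrt hZ
    _ ≤ max 1 √(C / c) * (Real.exp (-(b / 2) * d) * √Z₀) := by
        gcongr; exact le_max_right _ _
    _ = max 1 √(C / c) * Real.exp (-(b / 2) * d) * √Z₀ := by ring

section ClosedLoop

variable {ι : Type*} [Fintype ι] [DecidableEq ι]

noncomputable def errorLyapunov (Λ M : Matrix ι ι ℝ) (q σ : ι → ℝ) : ℝ :=
  q ⬝ᵥ Λ *ᵥ q + σ ⬝ᵥ M⁻¹ *ᵥ σ

noncomputable def errorDissipation (Λ M G : Matrix ι ι ℝ) (q σ : ι → ℝ) : ℝ :=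
  2 * ((Λ *ᵥ q - (1/2 : ℝ) • (σ - M⁻¹ *ᵥ σ)) ⬝ᵥ M⁻¹ *ᵥ (Λ *ᵥ q - (1/2 : ℝ) • (σ - M⁻¹ *ᵥ σ)))
    + 2 * (M⁻¹ *ᵥ σ ⬝ᵥ G *ᵥ M⁻¹ *ᵥ σ)

variable {Λ Kd M M' S D : Matrix ι ι ℝ}

theorem errorLyapunov_deriv_eq (hΛ : Λ.IsSymm) (hM : M.IsSymm) (hMunit : IsUnit M)
    (hS : Sᵀ = -S) {q σ q' σ' : ι → ℝ} (hq' : q' = M⁻¹ *ᵥ (σ - Λ *ᵥ q))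
    (hσ' : σ' = -(M⁻¹ *ᵥ (Λ *ᵥ q)) - (S + D - (1/2 : ℝ) • M' + Kd) *ᵥ (M⁻¹ *ᵥ σ)) :
    q' ⬝ᵥ Λ *ᵥ q + q ⬝ᵥ Λ *ᵥ q'
      + (σ' ⬝ᵥ M⁻¹ *ᵥ σ + σ ⬝ᵥ (-(M⁻¹ * M' * M⁻¹)) *ᵥ σ + σ ⬝ᵥ M⁻¹ *ᵥ σ')
    = -errorDissipation Λ M (D + Kd + (1/2 : ℝ) • 1 - (1/4 : ℝ) • (M⁻¹ + M)) q σ := by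
  have hN := hM.inv
  obtain ⟨y, rfl⟩ : ∃ y, σ = M *ᵥ y := ⟨M⁻¹ *ᵥ σ, (mulVec_inv_mulVec hMunit σ).symm⟩
  have hNM := inv_mulVec_mulVec hMunit y
  have hMyN : ∀ z, M *ᵥ y ⬝ᵥ M⁻¹ *ᵥ z = y ⬝ᵥ z := fun z => by
    rw [hN.dotProduct_mulVec_comm, dotProduct_comm, hNM]
  have hqΛ : ∀ z, q ⬝ᵥ Λ *ᵥ z = Λ *ᵥ q ⬝ᵥ z := fun z => by
    rw [hΛ.dotProduct_mulVec_comm, dotProduct_comm]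
  subst hq' hσ'
  simp only [errorDissipation, mulVec_add, mulVec_sub, mulVec_neg, mulVec_smul, add_mulVec,
    sub_mulVec, neg_mulVec, smul_mulVec, one_mulVec, dotProduct_add,
    dotProduct_sub, sub_dotProduct, dotProduct_neg, dotProduct_smul, smul_dotProduct, smul_eq_mul,
    ← mulVec_mulVec, hNM, hMyN, hqΛ, dotProduct_comm _ y, dotProduct_comm (M⁻¹ *ᵥ Λ *ᵥ q),
    hN.dotProduct_mulVec_comm (Λ *ᵥ q) y,
    dotProduct_mulVec_self_eq_zero_of_transpose_eq_neg hS]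
  ring

theorem hasDerivAt_errorLyapunov {M : ℝ → Matrix ι ι ℝ} {q σ : ℝ → ι → ℝ} {t : ℝ}
    (hΛ : Λ.IsSymm) (hM : (M t).IsSymm) (hMunit : IsUnit (M t)) (hS : Sᵀ = -S)
    (hM' : ∀ i j, HasDerivAt (fun s => M s i j) (M' i j) t)
    (hq : HasDerivAt q ((M t)⁻¹ *ᵥ (σ t - Λ *ᵥ q t)) t)
    (hσ : HasDerivAt σ
      (-((M t)⁻¹ *ᵥ (Λ *ᵥ q t)) - (S + D - (1/2 : ℝ) • M' + Kd) *ᵥ ((M t)⁻¹ *ᵥ σ t)) t) :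
    HasDerivAt (fun s => errorLyapunov Λ (M s) (q s) (σ s))
      (-errorDissipation Λ (M t) (D + Kd + (1/2 : ℝ) • 1 - (1/4 : ℝ) • ((M t)⁻¹ + M t))
        (q t) (σ t)) t :=
  ((hq.dotProduct_mulVec hq (A' := 0) fun i j => hasDerivAt_const t (Λ i j)).add
    (hσ.dotProduct_mulVec hσ (hasDerivAt_matrix_inv_apply hM' hMunit))).congr_deriv <| by
    rw [zero_mulVec, dotProduct_zero, add_zero]
    exact errorLyapunov_deriv_eq hΛ hM hMunit hS rfl rfl

end ClosedLoop

section Bounds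

variable {ι : Type*} [Fintype ι] [DecidableEq ι] {Λ M G : Matrix ι ι ℝ} {m₁ m₂ : ℝ}

theorem dotProduct_inv_mulVec_le_two_mul_add (hm₁ : 0 < m₁)
    (hMlo : ∀ x, m₁ * (x ⬝ᵥ x) ≤ x ⬝ᵥ M *ᵥ x) (hMhi : ∀ x, x ⬝ᵥ M *ᵥ x ≤ m₂ * (x ⬝ᵥ x))
    (u σ : ι → ℝ) :
    u ⬝ᵥ M⁻¹ *ᵥ u
      ≤ 2 * ((u - (1/2 : ℝ) • (σ - M⁻¹ *ᵥ σ)) ⬝ᵥ M⁻¹ *ᵥ (u - (1/2 : ℝ) • (σ - M⁻¹ *ᵥ σ)))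
        + (m₂ + m₁⁻¹) * (M⁻¹ *ᵥ σ ⬝ᵥ M⁻¹ *ᵥ σ) := by
  have hNpos := dotProduct_inv_mulVec_nonneg hm₁ hMlo
  have hσ := dotProduct_inv_mulVec_eq (isUnit_of_forall_mul_dotProduct_self_le hm₁ hMlo) σ
  set y := M⁻¹ *ᵥ σ
  have hyN : y ⬝ᵥ M⁻¹ *ᵥ y ≤ m₁⁻¹ * (y ⬝ᵥ y) := by
    rw [le_inv_mul_iff₀ hm₁]; exact mul_dotProduct_inv_mulVec_le hm₁ hMlo y
  have hw : (σ - y) ⬝ᵥ M⁻¹ *ᵥ (σ - y) ≤ 2 * (m₂ + m₁⁻¹) * (y ⬝ᵥ y) := by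
    have := dotProduct_mulVec_add_le hNpos σ (-y)
    simp only [← sub_eq_add_neg, mulVec_neg, dotProduct_neg, neg_dotProduct, neg_neg] at this
    nlinarith [hMhi y]
  have := dotProduct_mulVec_add_le hNpos (u - (1/2 : ℝ) • (σ - y)) ((1/2 : ℝ) • (σ - y))
  simp only [sub_add_cancel, mulVec_smul, dotProduct_smul, smul_dotProduct, smul_eq_mul] at this
  linarith

theorem errorLyapunov_le_mul_errorDissipation {lam ε : ℝ} (hlam : 0 < lam) (hm₁ : 0 < m₁)
    (hm₂ : 0 < m₂) (hε : 0 < ε) (hΛ : ∀ x, lam * (x ⬝ᵥ x) ≤ x ⬝ᵥ Λ *ᵥ x) (hM : M.IsSymm)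
    (hMlo : ∀ x, m₁ * (x ⬝ᵥ x) ≤ x ⬝ᵥ M *ᵥ x) (hMhi : ∀ x, x ⬝ᵥ M *ᵥ x ≤ m₂ * (x ⬝ᵥ x))
    (hG : ∀ x, ε * (x ⬝ᵥ x) ≤ x ⬝ᵥ G *ᵥ x) (q σ : ι → ℝ) :
    errorLyapunov Λ M q σ
      ≤ (m₂ / lam + (m₂ * (m₂ + m₁⁻¹) / lam + m₂) / (2 * ε)) * errorDissipation Λ M G q σ := by
  have hσ := dotProduct_inv_mulVec_eq (isUnit_of_forall_mul_dotProduct_self_le hm₁ hMlo) σ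
  set y := M⁻¹ *ᵥ σ
  set X := (Λ *ᵥ q - (1/2 : ℝ) • (σ - y)) ⬝ᵥ M⁻¹ *ᵥ (Λ *ᵥ q - (1/2 : ℝ) • (σ - y))
  set c := m₂ + m₁⁻¹
  set a := m₂ / lam
  set b := (m₂ * c / lam + m₂) / (2 * ε)
  have hqΛ : lam * (q ⬝ᵥ Λ *ᵥ q) ≤ m₂ * (2 * X + c * (y ⬝ᵥ y)) :=
    (mul_dotProduct_mulVec_le hlam.le (hΛ q)).trans
      ((dotProduct_self_le_mul_dotProduct_inv_mulVec hM hm₁ hMlo hm₂ hMhi _).trans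
        (by gcongr; exact dotProduct_inv_mulVec_le_two_mul_add hm₁ hMlo hMhi _ σ))
  have hb : b * (2 * ε) = a * c + m₂ := by simp only [a, b]; field_simp
  have hX : 0 ≤ X := dotProduct_inv_mulVec_nonneg hm₁ hMlo _
  have hY := dotProduct_self_nonneg y
  calc errorLyapunov Λ M q σ = q ⬝ᵥ Λ *ᵥ q + y ⬝ᵥ M *ᵥ y := by rw [errorLyapunov, hσ]
    _ ≤ a * (2 * X + c * (y ⬝ᵥ y)) + m₂ * (y ⬝ᵥ y) := by
        gcongr
        · rw [div_mul_eq_mul_div, le_div_iff₀ hlam]; linarith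
        · exact hMhi y
    _ ≤ (a + b) * (2 * X + 2 * (ε * (y ⬝ᵥ y))) := by
        nlinarith [mul_nonneg (div_pos hm₂ hlam).le (mul_nonneg hε.le hY),
          mul_nonneg (by positivity : (0 : ℝ) ≤ b) hX]
    _ ≤ (a + b) * errorDissipation Λ M G q σ := by
        unfold errorDissipation
        gcongr
        exact hG y

theorem mul_le_errorLyapunov {lam : ℝ} (hΛ : ∀ x, lam * (x ⬝ᵥ x) ≤ x ⬝ᵥ Λ *ᵥ x)
    (hM : M.IsSymm) (hm₁ : 0 < m₁) (hMlo : ∀ x, m₁ * (x ⬝ᵥ x) ≤ x ⬝ᵥ M *ᵥ x) (hm₂ : 0 < m₂)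
    (hMhi : ∀ x, x ⬝ᵥ M *ᵥ x ≤ m₂ * (x ⬝ᵥ x)) (q σ : ι → ℝ) :
    min lam m₂⁻¹ * (q ⬝ᵥ q + σ ⬝ᵥ σ) ≤ errorLyapunov Λ M q σ := by
  have hσ : m₂⁻¹ * (σ ⬝ᵥ σ) ≤ σ ⬝ᵥ M⁻¹ *ᵥ σ := by
    rw [inv_mul_le_iff₀ hm₂]
    exact dotProduct_self_le_mul_dotProduct_inv_mulVec hM hm₁ hMlo hm₂ hMhi σ
  calc min lam m₂⁻¹ * (q ⬝ᵥ q + σ ⬝ᵥ σ)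
        = min lam m₂⁻¹ * (q ⬝ᵥ q) + min lam m₂⁻¹ * (σ ⬝ᵥ σ) := mul_add _ _ _
    _ ≤ lam * (q ⬝ᵥ q) + m₂⁻¹ * (σ ⬝ᵥ σ) := by
        gcongr
        · exact dotProduct_self_nonneg q
        · exact min_le_left _ _
        · exact dotProduct_self_nonneg σ
        · exact min_le_right _ _
    _ ≤ errorLyapunov Λ M q σ := add_le_add (hΛ q) hσ

theorem errorLyapunov_le_mul {C : ℝ} (hΛ : ∀ x, x ⬝ᵥ Λ *ᵥ x ≤ C * (x ⬝ᵥ x)) (hm₁ : 0 < m₁)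
    (hMlo : ∀ x, m₁ * (x ⬝ᵥ x) ≤ x ⬝ᵥ M *ᵥ x) (q σ : ι → ℝ) :
    errorLyapunov Λ M q σ ≤ max C m₁⁻¹ * (q ⬝ᵥ q + σ ⬝ᵥ σ) := by
  have hσ : σ ⬝ᵥ M⁻¹ *ᵥ σ ≤ m₁⁻¹ * (σ ⬝ᵥ σ) := by
    rw [le_inv_mul_iff₀ hm₁]; exact mul_dotProduct_inv_mulVec_le hm₁ hMlo σ
  calc errorLyapunov Λ M q σ ≤ C * (q ⬝ᵥ q) + m₁⁻¹ * (σ ⬝ᵥ σ) := add_le_add (hΛ q) hσ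
    _ ≤ max C m₁⁻¹ * (q ⬝ᵥ q) + max C m₁⁻¹ * (σ ⬝ᵥ σ) := by
        gcongr
        · exact dotProduct_self_nonneg q
        · exact le_max_left _ _
        · exact dotProduct_self_nonneg σ
        · exact le_max_right _ _
    _ = max C m₁⁻¹ * (q ⬝ᵥ q + σ ⬝ᵥ σ) := (mul_add _ _ _).symm

end Bounds

theorem closed_loop_error_system_exponentially_stable
    {n : ℕ}
    (Λ Kd : Matrix (Fin n) (Fin n) ℝ) (hΛsymm : Λ.IsSymm)
    (hΛpd : Λ.PosDef)
    (M M' : ℝ → Matrix (Fin n) (Fin n) ℝ)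
    (hMderiv : ∀ t i j, HasDerivAt (fun s => M s i j) (M' t i j) t)
    (hMsymm : ∀ t, (M t).IsSymm)
    (m₁ m₂ : ℝ) (hm₁ : 0 < m₁) (hm₁₂ : m₁ ≤ m₂)
    (hMlb : ∀ t, (M t - m₁ • (1 : Matrix (Fin n) (Fin n) ℝ)).PosSemidef)
    (hMub : ∀ t, (m₂ • (1 : Matrix (Fin n) (Fin n) ℝ) - M t).PosSemidef)
    (S D : ℝ → Matrix (Fin n) (Fin n) ℝ)
    (hSskew : ∀ t, (S t)ᵀ = -(S t))
    (ε : ℝ) (hε : 0 < ε)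
    (hgain : ∀ t, (D t + Kd + (1/2 : ℝ) • (1 : Matrix (Fin n) (Fin n) ℝ)
        - (1/4 : ℝ) • ((M t)⁻¹ + M t)
        - ε • (1 : Matrix (Fin n) (Fin n) ℝ)).PosSemidef) :
    ∃ C ≥ (1 : ℝ), ∃ β > (0 : ℝ),
      ∀ qe σ : ℝ → Fin n → ℝ,
        (∀ t, HasDerivAt qe ((M t)⁻¹ *ᵥ (σ t - Λ *ᵥ qe t)) t) →
        (∀ t, HasDerivAt σ
            (-((M t)⁻¹ *ᵥ (Λ *ᵥ qe t))
              - (S t + D t - (1/2 : ℝ) • M' t + Kd) *ᵥ ((M t)⁻¹ *ᵥ σ t)) t) →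
        ∀ t₀ t : ℝ, t₀ ≤ t →
          Real.sqrt (qe t ⬝ᵥ qe t + σ t ⬝ᵥ σ t)
            ≤ C * Real.exp (-β * (t - t₀)) * Real.sqrt (qe t₀ ⬝ᵥ qe t₀ + σ t₀ ⬝ᵥ σ t₀) := by
  have hm₂ : 0 < m₂ := hm₁.trans_le hm₁₂
  obtain ⟨lam, hlam, hΛlo⟩ := hΛpd.exists_pos_mul_dotProduct_self_le
  obtain ⟨CΛ, hΛhi⟩ := exists_dotProduct_mulVec_le Λ
  have hMlo t := mul_dotProduct_self_le_of_posSemidef (hMlb t)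
  have hMhi t := dotProduct_mulVec_le_of_posSemidef (hMub t)
  set K := m₂ / lam + (m₂ * (m₂ + m₁⁻¹) / lam + m₂) / (2 * ε)
  have hK : 0 < K := by positivity
  refine ⟨max 1 √(max CΛ m₁⁻¹ / min lam m₂⁻¹), le_max_left _ _, K⁻¹ / 2, by positivity, ?_⟩
  intro qe σ hqe hσ t₀ t ht
  have hV τ := hasDerivAt_errorLyapunov hΛsymm (hMsymm τ)
    (isUnit_of_forall_mul_dotProduct_self_le hm₁ (hMlo τ)) (hSskew τ) (hMderiv τ) (hqe τ) (hσ τ)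
  have hdecay := le_mul_exp_of_hasDerivAt_le (b := K⁻¹) hV (fun τ => by
    have := errorLyapunov_le_mul_errorDissipation hlam hm₁ hm₂ hε hΛlo (hMsymm τ) (hMlo τ)
      (hMhi τ) (mul_dotProduct_self_le_of_posSemidef (hgain τ)) (qe τ) (σ τ)
    rw [← inv_mul_le_iff₀ hK] at this
    linarith) ht
  exact sqrt_le_of_le_mul_exp (lt_min hlam (inv_pos.2 hm₂))
    (add_nonneg (dotProduct_self_nonneg _) (dotProduct_self_nonneg _))
    (mul_le_errorLyapunov hΛlo (hMsymm t) hm₁ (hMlo t) hm₂ (hMhi t) (qe t) (σ t))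
    (errorLyapunov_le_mul hΛhi hm₁ (hMlo t₀) (qe t₀) (σ t₀)) hdecay
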